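/- arXiv:1910.03690 — 2 statements merged into one kernel-verified Lean document; each statement's English description precedes it below -/
import Mathlib

section
/- Let X be a compact Hausdorff topological space, let f ⊆ X × X be a closed relation on X, and let B ⊆ X be an attractor block for f. Then B is a neighborhood of the omega limit set ω(B; f), and ω(B; f) is an attractor for f. -/
/-- The image of a set `S` under a relation `f ⊆ X × X`. -/
def relImage {X : Type*} (f : Set (X × X)) (S : Set X) : Set X :=
  {y | ∃ x ∈ S, (x, y) ∈ f}

/-- Composition of relations: `relComp g f = {(x,z) | ∃ y, (x,y) ∈ f ∧ (y,z) ∈ g}`. -/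
def relComp {X : Type*} (g f : Set (X × X)) : Set (X × X) :=
  {p | ∃ y, (p.1, y) ∈ f ∧ (y, p.2) ∈ g}

/-- Iterates of a relation: `f⁰ = id`, `fⁿ⁺¹ = f ∘ fⁿ`. -/
def relIter {X : Type*} (f : Set (X × X)) : ℕ → Set (X × X)
  | 0 => {p | p.1 = p.2}
  | n + 1 => relComp f (relIter f n)

/-- A set `K` is confining for `f` if `f(K) ⊆ K`. -/
def Confining {X : Type*} (f : Set (X × X)) (K : Set X) : Prop :=
  relImage f K ⊆ K

/-- The omega limit set `ω(S; f)`: the intersection of all closed confining sets `K`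
with `fⁿ(S) ⊆ K` for some `n ≥ 0`. -/
def relOmegaLimit {X : Type*} [TopologicalSpace X] (f : Set (X × X)) (S : Set X) : Set X :=
  ⋂₀ {K | IsClosed K ∧ Confining f K ∧ ∃ n : ℕ, relImage (relIter f n) S ⊆ K}

/-- `B` is an attractor block for `f` if `f(closure B) ⊆ interior B`. -/
def IsAttractorBlock {X : Type*} [TopologicalSpace X] (f : Set (X × X)) (B : Set X) : Prop :=
  relImage f (closure B) ⊆ interior B

/-- `A` is an attractor for `f` if `f(A) = A` and there is a neighborhood `U` of `A`
with `ω(U; f) = A`. -/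
def IsAttractor {X : Type*} [TopologicalSpace X] (f : Set (X × X)) (A : Set X) : Prop :=
  relImage f A = A ∧ ∃ U ∈ nhdsSet A, relOmegaLimit f U = A

/-!
Write `𝒦(S)` (`relOmegaFamily f S`) for the family of closed confining sets containing some
`fⁿ(S)`, so that `ω(S; f) = ⋂₀ 𝒦(S)`. The family is closed under finite intersections and,
when `f` is closed in a compact Hausdorff space, under taking images by `f`. Hence `ω(S; f)`
is confining, and conversely each `a ∈ ω(S; f)` has a preimage in every member of `𝒦(S)`;
Cantor's intersection theorem for the directed family of closed sets `f⁻¹{a} ∩ K` yields a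
preimage in `ω(S; f)`. For an attractor block `B`, the compact set
`f(closure B) ⊆ interior B` belongs to `𝒦(B)`, so `ω(B; f) ⊆ interior B`, and `B` itself is
the neighbourhood required of an attractor.
-/

open Set

section RelationDynamics

variable {X : Type*}

theorem relImage_mono (f : Set (X × X)) {S T : Set X} (h : S ⊆ T) :
    relImage f S ⊆ relImage f T :=
  fun _ ⟨x, hx, hxy⟩ => ⟨x, h hx, hxy⟩

@[simp]
theorem relImage_relIter_zero (f : Set (X × X)) (S : Set X) :
    relImage (relIter f 0) S = S := by
  ext y
  constructor
  · rintro ⟨x, hx, rfl : x = y⟩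
    exact hx
  · exact fun hy => ⟨y, hy, rfl⟩

theorem relImage_relIter_succ (f : Set (X × X)) (n : ℕ) (S : Set X) :
    relImage (relIter f (n + 1)) S = relImage f (relImage (relIter f n) S) := by
  ext y
  constructor
  · rintro ⟨x, hx, z, hxz, hzy⟩
    exact ⟨z, ⟨x, hx, hxz⟩, hzy⟩
  · rintro ⟨z, ⟨x, hx, hxz⟩, hzy⟩
    exact ⟨x, hx, z, hxz, hzy⟩

theorem Confining.inter {f : Set (X × X)} {K L : Set X} (hK : Confining f K)
    (hL : Confining f L) : Confining f (K ∩ L) :=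
  subset_inter ((relImage_mono f inter_subset_left).trans hK)
    ((relImage_mono f inter_subset_right).trans hL)

theorem confining_relImage {f : Set (X × X)} {K : Set X} (hK : Confining f K) :
    Confining f (relImage f K) :=
  relImage_mono f hK

theorem Confining.relImage_relIter_subset {f : Set (X × X)} {K S : Set X}
    (hK : Confining f K) {n m : ℕ} (hn : relImage (relIter f n) S ⊆ K) (hnm : n ≤ m) :
    relImage (relIter f m) S ⊆ K := by
  induction m, hnm using Nat.le_induction with
  | base => exact hn
  | succ m _ ih =>
    exact (relImage_relIter_succ f m S).subset.trans ((relImage_mono f ih).trans hK)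

theorem isCompact_relImage [TopologicalSpace X] [CompactSpace X] {f : Set (X × X)}
    (hf : IsClosed f) {K : Set X} (hK : IsClosed K) : IsCompact (relImage f K) := by
  have hgraph : relImage f K = Prod.snd '' (f ∩ K ×ˢ univ) := by
    ext y
    constructor
    · rintro ⟨x, hx, hxy⟩
      exact ⟨(x, y), ⟨hxy, hx, trivial⟩, rfl⟩
    · rintro ⟨⟨x, y⟩, ⟨hxy, hx, -⟩, rfl⟩
      exact ⟨x, hx, hxy⟩
  rw [hgraph]
  exact (hf.inter (hK.prod isClosed_univ)).isCompact.image continuous_snd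

section OmegaLimit

variable [TopologicalSpace X] {f : Set (X × X)} {S : Set X}

def relOmegaFamily (f : Set (X × X)) (S : Set X) : Set (Set X) :=
  {K | IsClosed K ∧ Confining f K ∧ ∃ n : ℕ, relImage (relIter f n) S ⊆ K}

theorem relOmegaLimit_subset {K : Set X} (hK : K ∈ relOmegaFamily f S) :
    relOmegaLimit f S ⊆ K :=
  sInter_subset_of_mem hK

theorem univ_mem_relOmegaFamily : univ ∈ relOmegaFamily f S :=
  ⟨isClosed_univ, subset_univ _, 0, subset_univ _⟩

theorem inter_mem_relOmegaFamily {K L : Set X} (hK : K ∈ relOmegaFamily f S)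
    (hL : L ∈ relOmegaFamily f S) : K ∩ L ∈ relOmegaFamily f S := by
  obtain ⟨hKc, hKf, n, hn⟩ := hK
  obtain ⟨hLc, hLf, m, hm⟩ := hL
  exact ⟨hKc.inter hLc, hKf.inter hLf, max n m,
    subset_inter (hKf.relImage_relIter_subset hn (le_max_left n m))
      (hLf.relImage_relIter_subset hm (le_max_right n m))⟩

theorem relImage_mem_relOmegaFamily [CompactSpace X] [T2Space X] (hf : IsClosed f)
    {K : Set X} (hK : K ∈ relOmegaFamily f S) : relImage f K ∈ relOmegaFamily f S := by
  obtain ⟨hKc, hKf, n, hn⟩ := hK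
  refine ⟨(isCompact_relImage hf hKc).isClosed, confining_relImage hKf, n + 1, ?_⟩
  rw [relImage_relIter_succ]
  exact relImage_mono f hn

theorem confining_relOmegaLimit : Confining f (relOmegaLimit f S) := by
  rintro y ⟨x, hx, hxy⟩
  exact mem_sInter.2 fun K hK => hK.2.1 ⟨x, mem_sInter.1 hx K hK, hxy⟩

theorem relOmegaLimit_subset_relImage [CompactSpace X] [T2Space X] (hf : IsClosed f) :
    relOmegaLimit f S ⊆ relImage f (relOmegaLimit f S) := by
  intro a ha
  let P : Set X := {x | (x, a) ∈ f}
  have hP : IsClosed P := hf.preimage (continuous_id.prodMk continuous_const)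
  have hPK : ∀ K ∈ relOmegaFamily f S, (P ∩ K).Nonempty := by
    intro K hK
    obtain ⟨x, hx, hxa⟩ := relOmegaLimit_subset (relImage_mem_relOmegaFamily hf hK) ha
    exact ⟨x, hxa, hx⟩
  have : Nonempty (relOmegaFamily f S) := ⟨⟨univ, univ_mem_relOmegaFamily⟩⟩
  obtain ⟨x, hx⟩ := IsCompact.nonempty_iInter_of_directed_nonempty_isCompact_isClosed
    (fun K : relOmegaFamily f S => P ∩ K)
    (fun K L => ⟨⟨K ∩ L, inter_mem_relOmegaFamily K.2 L.2⟩,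
      inter_subset_inter_right P inter_subset_left,
      inter_subset_inter_right P inter_subset_right⟩)
    (fun K => hPK K K.2) (fun K => (hP.inter K.2.1).isCompact) (fun K => hP.inter K.2.1)
  simp only [mem_iInter, mem_inter_iff] at hx
  exact ⟨x, mem_sInter.2 fun K hK => (hx ⟨K, hK⟩).2,
    (hx ⟨univ, univ_mem_relOmegaFamily⟩).1⟩

theorem relImage_relOmegaLimit [CompactSpace X] [T2Space X] (hf : IsClosed f) :
    relImage f (relOmegaLimit f S) = relOmegaLimit f S :=
  confining_relOmegaLimit.antisymm (relOmegaLimit_subset_relImage hf)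

theorem IsAttractorBlock.relImage_closure_mem_relOmegaFamily [CompactSpace X] [T2Space X]
    (hf : IsClosed f) {B : Set X} (hB : IsAttractorBlock f B) :
    relImage f (closure B) ∈ relOmegaFamily f B := by
  refine ⟨(isCompact_relImage hf isClosed_closure).isClosed,
    relImage_mono f (hB.trans (interior_subset.trans subset_closure)), 1, ?_⟩
  rw [relImage_relIter_succ, relImage_relIter_zero]
  exact relImage_mono f subset_closure

theorem IsAttractorBlock.mem_nhdsSet_relOmegaLimit [CompactSpace X] [T2Space X]
    (hf : IsClosed f) {B : Set X} (hB : IsAttractorBlock f B) :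
    B ∈ nhdsSet (relOmegaLimit f B) :=
  subset_interior_iff_mem_nhdsSet.1
    ((relOmegaLimit_subset (hB.relImage_closure_mem_relOmegaFamily hf)).trans hB)

end OmegaLimit

end RelationDynamics

/-- If `f` is a closed relation on a compact Hausdorff space and `B` is an attractor
block for `f`, then `B` is a neighborhood of `ω(B; f)` and `ω(B; f)` is an attractor. -/
theorem attractorBlock_relOmegaLimit {X : Type*} [TopologicalSpace X]
    [CompactSpace X] [T2Space X] (f : Set (X × X)) (hf : IsClosed f)
    (B : Set X) (hB : IsAttractorBlock f B) :
    B ∈ nhdsSet (relOmegaLimit f B) ∧ IsAttractor f (relOmegaLimit f B) := by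
  have hnhds := hB.mem_nhdsSet_relOmegaLimit hf
  exact ⟨hnhds, relImage_relOmegaLimit hf, B, hnhds, rfl⟩
end

section
/- Let X be a topological space, let f ⊆ X × X be a relation on X, and let B ⊆ X be an attractor block for f. Then every relation g ⊆ X × X satisfying g ⊆ (closure(B) × closure(Bᶜ))ᶜ also has B as an attractor block; moreover the set V = (closure(B) × closure(Bᶜ))ᶜ is open in X × X and contains f. -/
theorem relImage_subset_iff {X : Type*} {f : Set (X × X)} {S T : Set X} :
    relImage f S ⊆ T ↔ ∀ p ∈ f, p.1 ∈ S → p.2 ∈ T := by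
  constructor
  · rintro h ⟨x, y⟩ hxy hx
    exact h ⟨x, hx, hxy⟩
  · rintro h y ⟨x, hx, hxy⟩
    exact h (x, y) hxy hx

section

variable {X : Type*} [TopologicalSpace X] {B : Set X}

theorem mem_compl_closure_prod_closure_compl_iff {p : X × X} :
    p ∈ (closure B ×ˢ closure Bᶜ)ᶜ ↔ (p.1 ∈ closure B → p.2 ∈ interior B) := by
  rw [closure_compl, Set.mem_compl_iff, Set.mem_prod, Set.mem_compl_iff, not_and, not_not]

theorem isAttractorBlock_iff_subset_compl_closure_prod {f : Set (X × X)} :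
    IsAttractorBlock f B ↔ f ⊆ (closure B ×ˢ closure Bᶜ)ᶜ := by
  rw [IsAttractorBlock, relImage_subset_iff]
  exact forall₂_congr fun _ _ => mem_compl_closure_prod_closure_compl_iff.symm

theorem isOpen_compl_closure_prod_closure_compl :
    IsOpen (closure B ×ˢ closure Bᶜ)ᶜ :=
  (isClosed_closure.prod isClosed_closure).isOpen_compl

end

/-- If `B` is an attractor block for `f`, then every relation
`g ⊆ (closure B × closure Bᶜ)ᶜ` also has `B` as an attractor block; moreover
`V = (closure B × closure Bᶜ)ᶜ` is open and contains `f`. -/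
theorem attractorBlock_of_subset_compl {X : Type*} [TopologicalSpace X]
    (f : Set (X × X)) (B : Set X) (hB : IsAttractorBlock f B) :
    (∀ g : Set (X × X), g ⊆ (closure B ×ˢ closure Bᶜ)ᶜ → IsAttractorBlock g B) ∧
      IsOpen ((closure B ×ˢ closure Bᶜ)ᶜ) ∧ f ⊆ (closure B ×ˢ closure Bᶜ)ᶜ :=
  ⟨fun _ => isAttractorBlock_iff_subset_compl_closure_prod.2,
    isOpen_compl_closure_prod_closure_compl,
    isAttractorBlock_iff_subset_compl_closure_prod.1 hB⟩
end
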